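/- arXiv:math/0211125 — 9 statements merged into one kernel-verified Lean document; each statement's English description precedes it below -/
import Mathlib

section
/- Let A be a commutative ring and f a monic polynomial of degree n over A. The splitting algebra A_f of f, defined as A[t_1,...,t_n]/(s_1 - f_1, ..., s_n - f_n) where s_i are the elementary symmetric polynomials and f_i the (signed) coefficients of f, satisfies the universal property: for every A-algebra B and every complete factorization of the image of f in B[t] as (t - v_1)...(t - v_n), there is a unique A-algebra homomorphism A_f → B sending the class τ_i of t_i to v_i for all i. -/
open MvPolynomial Polynomial

/-- The ideal `(s₁ - f₁, ..., sₙ - fₙ)` defining the splitting algebra, where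
`fᵢ = (-1)^i · coeff f (n - i)` are the signed coefficients of `f`. -/
noncomputable def splittingIdeal (A : Type*) [CommRing A] (f : Polynomial A) (n : ℕ) :
    Ideal (MvPolynomial (Fin n) A) :=
  Ideal.span (Set.range fun i : Fin n =>
    esymm (Fin n) A ((i : ℕ) + 1) -
      MvPolynomial.C ((-1 : A) ^ ((i : ℕ) + 1) * f.coeff (n - ((i : ℕ) + 1))))

/-- The splitting algebra `A_f = A[t₁,...,tₙ]/(s₁ - f₁, ..., sₙ - fₙ)`. -/
noncomputable def SplittingAlgebra (A : Type*) [CommRing A] (f : Polynomial A) (n : ℕ) :=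
  MvPolynomial (Fin n) A ⧸ splittingIdeal A f n

noncomputable instance (A : Type*) [CommRing A] (f : Polynomial A) (n : ℕ) :
    CommRing (SplittingAlgebra A f n) := Ideal.Quotient.commRing _

noncomputable instance (R A : Type*) [CommSemiring R] [CommRing A] [Algebra R A]
    (f : Polynomial A) (n : ℕ) : Algebra R (SplittingAlgebra A f n) :=
  Ideal.Quotient.algebra R

/-- The universal roots `τᵢ` of `f` in the splitting algebra. -/
noncomputable def univRoot (A : Type*) [CommRing A] (f : Polynomial A) (n : ℕ) (i : Fin n) :
    SplittingAlgebra A f n :=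
  Ideal.Quotient.mk (splittingIdeal A f n) (MvPolynomial.X i)

/-- The action of a permutation `σ` on the splitting algebra, sending `τᵢ` to `τ_{σ⁻¹ i}`. -/
noncomputable def permHom (A : Type*) [CommRing A] (f : Polynomial A) (n : ℕ)
    (σ : Equiv.Perm (Fin n)) : SplittingAlgebra A f n →ₐ[A] SplittingAlgebra A f n :=
  Ideal.Quotient.liftₐ (splittingIdeal A f n)
    ((Ideal.Quotient.mkₐ A (splittingIdeal A f n)).comp
      (rename (σ.symm : Fin n → Fin n)))
    (by
      intro a ha
      have h : splittingIdeal A f n ≤ RingHom.ker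
          ((Ideal.Quotient.mkₐ A (splittingIdeal A f n)).comp
            (rename (σ.symm : Fin n → Fin n))) := by
        rw [splittingIdeal, Ideal.span_le]
        rintro _ ⟨i, rfl⟩
        have : (rename (σ.symm : Fin n → Fin n))
            (esymm (Fin n) A ((i : ℕ) + 1) -
              MvPolynomial.C ((-1 : A) ^ ((i : ℕ) + 1) * f.coeff (n - ((i : ℕ) + 1)))) =
            esymm (Fin n) A ((i : ℕ) + 1) -
              MvPolynomial.C ((-1 : A) ^ ((i : ℕ) + 1) * f.coeff (n - ((i : ℕ) + 1))) := by
          rw [map_sub, rename_esymm, rename_C]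
        simp only [SetLike.mem_coe, RingHom.mem_ker, AlgHom.coe_comp, Function.comp_apply, this]
        rw [Ideal.Quotient.mkₐ_eq_mk, Ideal.Quotient.eq_zero_iff_mem]
        exact Ideal.subset_span ⟨i, rfl⟩
      exact h ha)

/-! Vieta's formulas: the coefficient of `t^(n-k)` in `∏ (t - vᵢ)` is `(-1)^k eₖ(v)`, so
`tᵢ ↦ vᵢ` kills every generator `sₖ - fₖ` of the defining ideal and descends to `A_f`.
Uniqueness holds because the `τᵢ` generate `A_f` as an `A`-algebra. -/

theorem aeval_esymm_of_map_eq_prod_X_sub_C {A B ι : Type*} [CommRing A] [CommRing B]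
    [Algebra A B] [Fintype ι] {f : A[X]} {v : ι → B}
    (hsplit : f.map (algebraMap A B) = ∏ i, (Polynomial.X - Polynomial.C (v i)))
    {k : ℕ} (hk : k ≤ Fintype.card ι) :
    aeval v (esymm ι A k) =
      algebraMap A B ((-1) ^ k * f.coeff (Fintype.card ι - k)) := by
  have hcard : Multiset.card (Finset.univ.val.map v) = Fintype.card ι := by simp
  have hvieta := (Finset.univ.val.map v).prod_X_sub_C_coeff
    (k := Fintype.card ι - k) (by rw [hcard]; exact Nat.sub_le _ _)
  rw [hcard, Nat.sub_sub_self hk, Multiset.map_map] at hvieta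
  have hcoeff : algebraMap A B (f.coeff (Fintype.card ι - k)) =
      (-1) ^ k * (Finset.univ.val.map v).esymm k := by
    rw [← Polynomial.coeff_map, hsplit, ← hvieta]
    rfl
  rw [aeval_esymm_eq_multiset_esymm, map_mul, hcoeff, map_pow, map_neg, map_one,
    ← mul_assoc, ← mul_pow, neg_one_mul, neg_neg, one_pow, one_mul]

theorem splittingIdeal_le_ker_aeval {A B : Type*} [CommRing A] [CommRing B] [Algebra A B]
    {f : A[X]} {n : ℕ} {v : Fin n → B}
    (hsplit : f.map (algebraMap A B) = ∏ i, (Polynomial.X - Polynomial.C (v i))) :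
    splittingIdeal A f n ≤ RingHom.ker (aeval v : MvPolynomial (Fin n) A →ₐ[A] B) := by
  rw [splittingIdeal, Ideal.span_le]
  rintro _ ⟨i, rfl⟩
  have hvieta := aeval_esymm_of_map_eq_prod_X_sub_C hsplit (k := (i : ℕ) + 1)
  rw [Fintype.card_fin] at hvieta
  simp [hvieta i.2]

namespace SplittingAlgebra

variable {A B : Type*} [CommRing A] [CommRing B] [Algebra A B] {f : A[X]} {n : ℕ}

noncomputable def lift {v : Fin n → B}
    (hsplit : f.map (algebraMap A B) = ∏ i, (Polynomial.X - Polynomial.C (v i))) :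
    SplittingAlgebra A f n →ₐ[A] B :=
  Ideal.Quotient.liftₐ _ (aeval v) fun _ ha => splittingIdeal_le_ker_aeval hsplit ha

@[simp]
theorem lift_univRoot {v : Fin n → B}
    (hsplit : f.map (algebraMap A B) = ∏ i, (Polynomial.X - Polynomial.C (v i))) (i : Fin n) :
    lift hsplit (univRoot A f n i) = v i :=
  aeval_X v i

@[ext]
theorem algHom_ext {φ ψ : SplittingAlgebra A f n →ₐ[A] B}
    (h : ∀ i, φ (univRoot A f n i) = ψ (univRoot A f n i)) : φ = ψ :=
  Ideal.Quotient.algHom_ext _ (MvPolynomial.algHom_ext h)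

end SplittingAlgebra

theorem splittingAlgebra_universalProperty_general {A : Type*} [CommRing A]
    (f : Polynomial A) (n : ℕ)
    (B : Type*) [CommRing B] [Algebra A B] (v : Fin n → B)
    (hsplit : f.map (algebraMap A B) = ∏ i : Fin n, (Polynomial.X - Polynomial.C (v i))) :
    ∃! ψ : SplittingAlgebra A f n →ₐ[A] B, ∀ i : Fin n, ψ (univRoot A f n i) = v i :=
  ⟨SplittingAlgebra.lift hsplit, SplittingAlgebra.lift_univRoot hsplit,
    fun _ hψ => SplittingAlgebra.algHom_ext fun i => by simp [hψ i]⟩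

/-- **Universal property of the splitting algebra.** For every `A`-algebra `B` and every
complete factorization of the image of `f` in `B[t]`, there is a unique `A`-algebra
homomorphism `A_f → B` sending each universal root `τᵢ` to the given root `vᵢ`. -/
theorem splittingAlgebra_universalProperty {A : Type*} [CommRing A]
    (f : Polynomial A) (n : ℕ) (hmonic : f.Monic) (hdeg : f.natDegree = n)
    (B : Type*) [CommRing B] [Algebra A B] (v : Fin n → B)
    (hsplit : f.map (algebraMap A B) = ∏ i : Fin n, (Polynomial.X - Polynomial.C (v i))) :
    ∃! ψ : SplittingAlgebra A f n →ₐ[A] B, ∀ i : Fin n, ψ (univRoot A f n i) = v i :=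
  splittingAlgebra_universalProperty_general f n B v hsplit
end

section
/- In the splitting algebra A_f of a monic degree-n polynomial f over A, the polynomial f splits completely: the image of f in A_f[t] equals (t - τ_1)(t - τ_2)...(t - τ_n), where τ_i are the universal roots. -/
open MvPolynomial Polynomial

/-! By Vieta, the coefficient of `t^k` in `∏ (t - τᵢ)` is `(-1)^(n-k) eₙ₋ₖ(τ)`. The relations
defining `A_f` say precisely that `eₘ(τ) = (-1)^m` times the coefficient of `t^(n-m)` in `f` for
`1 ≤ m ≤ n`; monicity of `f` covers `m = 0`, and both sides vanish in degrees above `n`. -/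

theorem Multiset.prod_X_sub_C_eq_of_esymm {R : Type*} [CommRing R] (s : Multiset R) {p : R[X]}
    (hdeg : p.natDegree ≤ Multiset.card s)
    (hesymm : ∀ m ≤ Multiset.card s, s.esymm m = (-1) ^ m * p.coeff (Multiset.card s - m)) :
    (s.map fun t => Polynomial.X - Polynomial.C t).prod = p := by
  nontriviality R
  ext k
  rcases le_or_gt k (Multiset.card s) with hk | hk
  · rw [Multiset.prod_X_sub_C_coeff s hk, hesymm _ (Nat.sub_le _ _), Nat.sub_sub_self hk,
      ← mul_assoc, ← mul_pow, neg_one_mul, neg_neg, one_pow, one_mul]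
  · rw [coeff_eq_zero_of_natDegree_lt (hdeg.trans_lt hk), coeff_eq_zero_of_natDegree_lt]
    rwa [natDegree_multiset_prod_X_sub_C_eq_card]

theorem aeval_univRoot_eq_mk {A : Type*} [CommRing A] (f : A[X]) (n : ℕ)
    (p : MvPolynomial (Fin n) A) :
    MvPolynomial.aeval (univRoot A f n) p = Ideal.Quotient.mk (splittingIdeal A f n) p := by
  have : MvPolynomial.aeval (univRoot A f n) = Ideal.Quotient.mkₐ A (splittingIdeal A f n) :=
    algHom_ext fun i => aeval_X _ i
  exact AlgHom.congr_fun this p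

theorem esymm_univRoot {A : Type*} [CommRing A] (f : A[X]) {n m : ℕ} (hm : 0 < m) (hmn : m ≤ n) :
    (Finset.univ.val.map (univRoot A f n)).esymm m =
      algebraMap A (SplittingAlgebra A f n) ((-1) ^ m * f.coeff (n - m)) := by
  obtain ⟨i, rfl⟩ : ∃ i, m = i + 1 := Nat.exists_eq_add_one.mpr hm
  rw [← aeval_esymm_eq_multiset_esymm (Fin n) A, aeval_univRoot_eq_mk]
  exact Ideal.Quotient.eq.mpr (Ideal.subset_span ⟨⟨i, hmn⟩, rfl⟩)

/-- In the splitting algebra `A_f`, the polynomial `f` splits completely as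
`(t - τ₁)(t - τ₂)⋯(t - τₙ)`. -/
theorem splittingAlgebra_universalSplitting {A : Type*} [CommRing A]
    (f : Polynomial A) (n : ℕ) (hmonic : f.Monic) (hdeg : f.natDegree = n) :
    f.map (algebraMap A (SplittingAlgebra A f n)) =
      ∏ i : Fin n, (Polynomial.X - Polynomial.C (univRoot A f n i)) := by
  set τ := Finset.univ.val.map (univRoot A f n)
  have hcard : Multiset.card τ = n := by simp [τ]
  have hdeg' : (f.map (algebraMap A (SplittingAlgebra A f n))).natDegree ≤ Multiset.card τ :=
    natDegree_map_le.trans (hdeg.trans hcard.symm).le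
  have hesymm (m : ℕ) (hm : m ≤ Multiset.card τ) : τ.esymm m =
      (-1) ^ m * (f.map (algebraMap A _)).coeff (Multiset.card τ - m) := by
    rcases Nat.eq_zero_or_pos m with rfl | hpos
    · simp [hcard, ← hdeg, hmonic.coeff_natDegree, Multiset.esymm]
    · rw [Polynomial.coeff_map, hcard, esymm_univRoot f hpos (hcard ▸ hm), map_mul, map_pow,
        map_neg, map_one]
  rw [← Multiset.prod_X_sub_C_eq_of_esymm τ hdeg' hesymm, Multiset.map_map]
  rfl
end

section
/- The splitting algebra construction is compatible with base change: if φ : A → B is a ring homomorphism and f is a monic polynomial of degree n over A, then the canonical map B ⊗_A A_f → B_{φf} is an isomorphism of B-algebras, where φf denotes the polynomial over B obtained by applying φ to the coefficients of f. -/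
open MvPolynomial Polynomial

/-! Tensoring with `B` commutes with quotients and turns `A[t₁,…,tₙ]` into `B[t₁,…,tₙ]`, so
`B ⊗_A A_f` is `B[t₁,…,tₙ]` modulo the extension of the splitting ideal of `f`. That extension
is generated by the images of the generators `sᵢ - fᵢ`, which are the generators of the splitting
ideal of `φf`. -/

open scoped TensorProduct

namespace MvPolynomial

variable {R S σ : Type*} [CommRing R] [CommRing S] [Algebra R S]

theorem algebraTensorAlgEquiv_comp_includeRight :
    (algebraTensorAlgEquiv (σ := σ) R S : S ⊗[R] MvPolynomial σ R →+* MvPolynomial σ S).comp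
      (Algebra.TensorProduct.includeRight : MvPolynomial σ R →ₐ[R] S ⊗[R] MvPolynomial σ R) =
      map (algebraMap R S) := by
  ext <;> simp [algebraTensorAlgEquiv_tmul]

variable (S) in
noncomputable def algebraTensorQuotientEquiv (I : Ideal (MvPolynomial σ R)) :
    S ⊗[R] (MvPolynomial σ R ⧸ I) ≃ₐ[S] MvPolynomial σ S ⧸ I.map (map (algebraMap R S)) :=
  (Algebra.TensorProduct.tensorQuotientEquiv S _ S I).trans
    (Ideal.quotientEquivAlg _ _ (algebraTensorAlgEquiv R S) <| by
      rw [← Ideal.map_coe Algebra.TensorProduct.includeRight, Ideal.map_map,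
        algebraTensorAlgEquiv_comp_includeRight])

theorem algebraTensorQuotientEquiv_one_tmul_mk (I : Ideal (MvPolynomial σ R))
    (p : MvPolynomial σ R) :
    algebraTensorQuotientEquiv S I (1 ⊗ₜ Ideal.Quotient.mk I p) =
      Ideal.Quotient.mk _ (map (algebraMap R S) p) := by
  simp [algebraTensorQuotientEquiv]

end MvPolynomial

theorem splittingIdeal_map {A B : Type*} [CommRing A] [CommRing B] (φ : A →+* B)
    (f : Polynomial A) (n : ℕ) :
    (splittingIdeal A f n).map (MvPolynomial.map φ) = splittingIdeal B (f.map φ) n := by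
  simp only [splittingIdeal, Ideal.map_span, ← Set.range_comp]
  congr! 3 with i
  simp [map_esymm, Polynomial.coeff_map]

open scoped TensorProduct in
theorem splittingAlgebra_baseChange_general {A B : Type*} [CommRing A] [CommRing B] [Algebra A B]
    (f : Polynomial A) (n : ℕ) :
    ∃ e : (B ⊗[A] SplittingAlgebra A f n) ≃ₐ[B]
        SplittingAlgebra B (f.map (algebraMap A B)) n,
      ∀ i : Fin n, e (1 ⊗ₜ[A] univRoot A f n i) =
        univRoot B (f.map (algebraMap A B)) n i := by
  have hI := splittingIdeal_map (algebraMap A B) f n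
  refine ⟨(MvPolynomial.algebraTensorQuotientEquiv B (splittingIdeal A f n)).trans
    (Ideal.quotientEquivAlgOfEq B hI), fun i => ?_⟩
  change Ideal.quotientEquivAlgOfEq B hI (MvPolynomial.algebraTensorQuotientEquiv B
    (splittingIdeal A f n) (1 ⊗ₜ Ideal.Quotient.mk _ (X i))) = Ideal.Quotient.mk _ (X i)
  rw [MvPolynomial.algebraTensorQuotientEquiv_one_tmul_mk, MvPolynomial.map_X]
  rfl

open scoped TensorProduct in
/-- Splitting algebras are compatible with base change: the canonical map
`B ⊗_A A_f → B_{φf}` is an isomorphism of `B`-algebras. -/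
theorem splittingAlgebra_baseChange {A B : Type*} [CommRing A] [CommRing B] [Algebra A B]
    (f : Polynomial A) (n : ℕ) (hmonic : f.Monic) (hdeg : f.natDegree = n) :
    ∃ e : (B ⊗[A] SplittingAlgebra A f n) ≃ₐ[B]
        SplittingAlgebra B (f.map (algebraMap A B)) n,
      ∀ i : Fin n, e (1 ⊗ₜ[A] univRoot A f n i) =
        univRoot B (f.map (algebraMap A B)) n i :=
  splittingAlgebra_baseChange_general f n
end

section
/- Let B be a commutative ring and f a monic polynomial of degree n over B with splitting algebra B_f and universal roots τ_1,...,τ_n. If the discriminant Dis(f) = ∏_{i>j}(τ_i - τ_j)^2 is a regular element (neither zero nor a zero divisor) of B_f, then the ring of invariants of B_f under the action of the symmetric group S_n is exactly B. -/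
open MvPolynomial Polynomial

/-!
If `x = [P]` is invariant, antisymmetrizing `(∏ᵢ Xᵢ ^ i) * P` gives, modulo the splitting ideal,
`δ * x`, where `δ = ∏_{i<j} (τⱼ - τᵢ)` is the Vandermonde determinant of the universal roots.
Over `ℤ` every antisymmetrization is divisible by the Vandermonde polynomial, since its factors
`Xⱼ - Xᵢ` are pairwise non-associated primes, and the quotient is symmetric; by base change this
holds over `B` too. So `δ * x = δ * [Q]` with `Q` symmetric, and `[Q]` lies in `B` because it is a
polynomial in the elementary symmetric polynomials of the roots, i.e. in the coefficients of `f`.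
As `δ ^ 2 = Dis(f)` is regular, so is `δ`, and `x = [Q]`.
-/

theorem Finset.prod_filter_lt_eq_prod_Ioi {M ι : Type*} [CommMonoid M] [Fintype ι] [LinearOrder ι]
    [LocallyFiniteOrderTop ι] (F : ι → ι → M) :
    ∏ p ∈ univ.filter (fun p : ι × ι => p.2 < p.1), F p.1 p.2 = ∏ i, ∏ j ∈ Ioi i, F j i := by
  rw [prod_filter, Fintype.prod_prod_type]
  simp_rw [← prod_filter]
  exact prod_comm' fun j i => by simp

theorem Matrix.det_vandermonde_eq_prod_filter_lt {R : Type*} [CommRing R] {n : ℕ} (v : Fin n → R) :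
    (vandermonde v).det = ∏ p ∈ Finset.univ.filter (fun p : Fin n × Fin n => p.2 < p.1),
      (v p.1 - v p.2) := by
  rw [det_vandermonde, Finset.prod_filter_lt_eq_prod_Ioi (fun a b => v a - v b)]

namespace MvPolynomial

variable {R σ : Type*} [CommRing R]

theorem X_sub_X_ne_zero [Nontrivial R] {i j : σ} (hij : i ≠ j) :
    (X i - X j : MvPolynomial σ R) ≠ 0 :=
  sub_ne_zero.mpr ((X_injective (σ := σ) (R := R)).ne hij)

variable [DecidableEq σ]

theorem X_sub_X_dvd_sub_rename_update (i j : σ) (p : MvPolynomial σ R) :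
    (X i - X j : MvPolynomial σ R) ∣ p - rename (Function.update id i j) p := by
  induction p using MvPolynomial.induction_on with
  | C a => simp
  | add p q hp hq => simpa only [map_add, add_sub_add_comm] using dvd_add hp hq
  | mul_X p k hp =>
    have key : p * X k - rename (Function.update id i j) (p * X k) =
        (p - rename (Function.update id i j) p) * X k +
          rename (Function.update id i j) p * (X k - X (Function.update id i j k)) := by
      rw [map_mul, rename_X]; ring
    rw [key]
    refine dvd_add (dvd_mul_of_dvd_left hp _) (dvd_mul_of_dvd_right ?_ _)
    rcases eq_or_ne k i with rfl | hk
    · simp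
    · simp [Function.update_of_ne hk]

theorem X_sub_X_dvd_iff_rename_update_eq_zero {i j : σ} (hij : i ≠ j) {p : MvPolynomial σ R} :
    (X i - X j : MvPolynomial σ R) ∣ p ↔ rename (Function.update id i j) p = 0 := by
  refine ⟨?_, fun h => by simpa [h] using X_sub_X_dvd_sub_rename_update i j p⟩
  rintro ⟨q, rfl⟩
  simp [Function.update_of_ne hij.symm]

theorem prime_X_sub_X [IsDomain R] {i j : σ} (hij : i ≠ j) :
    Prime (X i - X j : MvPolynomial σ R) := by
  rw [← Ideal.span_singleton_prime (X_sub_X_ne_zero (R := R) hij)]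
  have hker : Ideal.span {X i - X j} =
      RingHom.ker (rename (R := R) (Function.update id i j)) := by
    ext p
    rw [Ideal.mem_span_singleton, X_sub_X_dvd_iff_rename_update_eq_zero hij, RingHom.mem_ker]
  rw [hker]
  exact RingHom.ker_isPrime _

variable [Fintype σ] {n : ℕ}

noncomputable def antisymmetrization : MvPolynomial σ R →ₗ[R] MvPolynomial σ R :=
  ∑ g : Equiv.Perm σ, (Equiv.Perm.sign g : ℤ) • (rename g).toLinearMap

theorem antisymmetrization_apply (p : MvPolynomial σ R) :
    antisymmetrization p = ∑ g : Equiv.Perm σ, (Equiv.Perm.sign g : ℤ) • rename g p := by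
  simp [antisymmetrization]

theorem rename_antisymmetrization (e : Equiv.Perm σ) (p : MvPolynomial σ R) :
    rename e (antisymmetrization p) = (Equiv.Perm.sign e : ℤ) • antisymmetrization p := by
  simp only [antisymmetrization_apply, map_sum, map_zsmul, rename_rename, Finset.smul_sum,
    smul_smul]
  refine Fintype.sum_equiv (Equiv.mulLeft e) _ _ fun g => ?_
  simp [Equiv.Perm.sign_mul, ← mul_assoc]

theorem rename_update_antisymmetrization {i j : σ} (hij : i ≠ j) (p : MvPolynomial σ R) :
    rename (Function.update id i j) (antisymmetrization p) = 0 := by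
  have hswap : Function.update id i j ∘ Equiv.swap i j = Function.update id i j := by
    ext k
    by_cases hk : k = i <;> by_cases hk' : k = j <;>
      simp [Equiv.swap_apply_def, Function.update_apply, hk, hk']
  rw [antisymmetrization_apply, map_sum]
  refine Finset.sum_ninvolution (Equiv.swap i j * ·) (fun g => ?_)
    (fun g _ => mt Equiv.swap_mul_eq_iff.mp hij) (fun _ => Finset.mem_univ _)
    (Equiv.swap_mul_self_mul i j)
  simp [rename_rename, ← Function.comp_assoc, hswap, Equiv.Perm.sign_swap hij]

theorem map_antisymmetrization {S : Type*} [CommRing S] (f : R →+* S) (p : MvPolynomial σ R) :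
    map f (antisymmetrization p) = antisymmetrization (map f p) := by
  simp [antisymmetrization_apply, map_rename]

theorem antisymmetrization_prod_X_pow :
    antisymmetrization (∏ i : Fin n, (X i : MvPolynomial (Fin n) R) ^ (i : ℕ)) =
      (Matrix.vandermonde X).det := by
  simp [antisymmetrization_apply, Matrix.det_apply, Units.smul_def]

theorem det_vandermonde_X_dvd_antisymmetrization [IsDomain R] [UniqueFactorizationMonoid R]
    (p : MvPolynomial (Fin n) R) :
    (Matrix.vandermonde (X : Fin n → MvPolynomial (Fin n) R)).det ∣ antisymmetrization p := by
  rw [Matrix.det_vandermonde_eq_prod_filter_lt]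
  refine Finset.prod_dvd_of_isRelPrime (fun q hq r hr hqr => ?_) fun q hq => ?_
  · simp only [Finset.coe_filter, Finset.mem_univ, true_and, Set.mem_ofPred_eq] at hq hr
    rw [Function.onFun, (prime_X_sub_X hq.ne').irreducible.isRelPrime_iff_not_dvd,
      X_sub_X_dvd_iff_rename_update_eq_zero hq.ne']
    simp only [map_sub, rename_X, sub_eq_zero, X_injective.eq_iff]
    grind [Function.update_apply, Prod.ext_iff]
  · simp only [Finset.mem_filter, Finset.mem_univ, true_and] at hq
    exact (X_sub_X_dvd_iff_rename_update_eq_zero hq.ne').mpr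
      (rename_update_antisymmetrization hq.ne' p)

theorem isSymmetric_of_antisymmetrization_eq_det_vandermonde_mul [IsDomain R]
    {p Q : MvPolynomial (Fin n) R}
    (hQ : antisymmetrization p =
      (Matrix.vandermonde (X : Fin n → MvPolynomial (Fin n) R)).det * Q) :
    Q.IsSymmetric := by
  intro e
  have h := rename_antisymmetrization e p
  rw [hQ, map_mul, ← antisymmetrization_prod_X_pow, rename_antisymmetrization,
    antisymmetrization_prod_X_pow, smul_mul_assoc, ← Units.smul_def, ← Units.smul_def,
    smul_left_cancel_iff] at h
  exact mul_left_cancel₀ (Matrix.det_vandermonde_ne_zero_iff.mpr X_injective) h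

theorem map_det_vandermonde_X {S : Type*} [CommRing S] (f : R →+* S) :
    map f (Matrix.vandermonde (X : Fin n → MvPolynomial (Fin n) R)).det =
      (Matrix.vandermonde X).det := by
  simp [Matrix.det_vandermonde]

theorem exists_isSymmetric_antisymmetrization_eq_det_vandermonde_mul
    (p : MvPolynomial (Fin n) R) :
    ∃ Q : MvPolynomial (Fin n) R, Q.IsSymmetric ∧
      antisymmetrization p = (Matrix.vandermonde (X : Fin n → MvPolynomial (Fin n) R)).det * Q := by
  induction p using MvPolynomial.induction_on' with
  | monomial a r =>
    obtain ⟨Q, hQ⟩ := det_vandermonde_X_dvd_antisymmetrization (monomial a (1 : ℤ))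
    refine ⟨r • map (Int.castRingHom R) Q,
      ((isSymmetric_of_antisymmetrization_eq_det_vandermonde_mul hQ).map _).smul r, ?_⟩
    have hmono : monomial a r = r • map (Int.castRingHom R) (monomial a (1 : ℤ)) := by
      simp [smul_monomial]
    rw [hmono, map_smul, ← map_antisymmetrization, hQ, map_mul, map_det_vandermonde_X,
      mul_smul_comm]
  | add p q hp hq =>
    obtain ⟨Qp, hQp, hp⟩ := hp
    obtain ⟨Qq, hQq, hq⟩ := hq
    exact ⟨Qp + Qq, hQp.add hQq, by rw [map_add, hp, hq, mul_add]⟩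

end MvPolynomial

namespace SplittingAlgebra

variable {B : Type*} [CommRing B] (f : Polynomial B) (n : ℕ)

noncomputable def mk : MvPolynomial (Fin n) B →ₐ[B] SplittingAlgebra B f n :=
  Ideal.Quotient.mkₐ B (splittingIdeal B f n)

theorem mk_surjective : Function.Surjective (mk f n) :=
  Ideal.Quotient.mkₐ_surjective B _

theorem permHom_mk (σ : Equiv.Perm (Fin n)) (p : MvPolynomial (Fin n) B) :
    permHom B f n σ (mk f n p) = mk f n (rename σ.symm p) :=
  rfl

theorem mk_esymm (i : Fin n) :
    mk f n (esymm (Fin n) B (i + 1)) =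
      algebraMap B _ ((-1) ^ ((i : ℕ) + 1) * f.coeff (n - ((i : ℕ) + 1))) :=
  Ideal.Quotient.eq.mpr (Ideal.subset_span ⟨i, rfl⟩)

theorem mk_mem_range_of_isSymmetric {Q : MvPolynomial (Fin n) B} (hQ : Q.IsSymmetric) :
    mk f n Q ∈ (algebraMap B (SplittingAlgebra B f n)).range := by
  obtain ⟨g, hg⟩ := esymmAlgHom_surjective (n := n) B (Fintype.card_fin n).le ⟨Q, hQ⟩
  have hQg : Q = MvPolynomial.aeval (fun i : Fin n => esymm (Fin n) B (i + 1)) g := by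
    rw [← esymmAlgHom_apply, hg]
  rw [hQg, comp_aeval_apply]
  simp_rw [mk_esymm]
  exact ⟨_, (MvPolynomial.aeval_algebraMap_apply (B := SplittingAlgebra B f n) _ g).symm⟩

theorem mk_antisymmetrization_mul {P : MvPolynomial (Fin n) B}
    (hP : ∀ σ : Equiv.Perm (Fin n), mk f n (rename σ P) = mk f n P)
    (q : MvPolynomial (Fin n) B) :
    mk f n (antisymmetrization (q * P)) = mk f n (antisymmetrization q) * mk f n P := by
  rw [antisymmetrization_apply, antisymmetrization_apply, map_sum, map_sum]
  refine (Finset.sum_congr rfl fun σ _ => ?_).trans (Finset.sum_mul ..).symm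
  rw [map_zsmul, map_zsmul, map_mul, map_mul, hP]
  exact (smul_mul_assoc (Equiv.Perm.sign σ : ℤ) _ _).symm

theorem mk_det_vandermonde_X :
    mk f n (Matrix.vandermonde X).det = (Matrix.vandermonde (univRoot B f n)).det := by
  rw [AlgHom.map_det]
  congr 1

end SplittingAlgebra

open SplittingAlgebra

theorem invariants_eq_base_of_discriminant_regular_general {B : Type*} [CommRing B]
    (f : Polynomial B) (n : ℕ)
    (hreg : (∏ p ∈ Finset.univ.filter (fun p : Fin n × Fin n => p.2 < p.1),
        (univRoot B f n p.1 - univRoot B f n p.2) ^ 2) ∈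
      nonZeroDivisors (SplittingAlgebra B f n)) :
    ∀ x : SplittingAlgebra B f n,
      (∀ σ : Equiv.Perm (Fin n), permHom B f n σ x = x) ↔
        x ∈ (algebraMap B (SplittingAlgebra B f n)).range := by
  intro x
  refine ⟨fun hinv => ?_, fun ⟨b, hb⟩ σ => hb ▸ (permHom B f n σ).commutes b⟩
  obtain ⟨P, rfl⟩ := mk_surjective f n x
  have hP (σ : Equiv.Perm (Fin n)) : mk f n (rename σ P) = mk f n P := by
    simpa [permHom_mk] using hinv σ.symm
  set δ := (Matrix.vandermonde (univRoot B f n)).det with hδ_def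
  have hδ : δ ∈ nonZeroDivisors _ := by
    rw [Finset.prod_pow, sq, ← Matrix.det_vandermonde_eq_prod_filter_lt] at hreg
    exact (mul_mem_nonZeroDivisors.mp hreg).1
  obtain ⟨Q, hQ, hPQ⟩ := exists_isSymmetric_antisymmetrization_eq_det_vandermonde_mul
    ((∏ i : Fin n, X i ^ (i : ℕ)) * P)
  have hδPQ : δ * mk f n P = δ * mk f n Q := by
    rw [hδ_def, ← mk_det_vandermonde_X, ← antisymmetrization_prod_X_pow,
      ← mk_antisymmetrization_mul f n hP, hPQ, map_mul, antisymmetrization_prod_X_pow]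
  rw [(isRegular_iff_mem_nonZeroDivisors.mpr hδ).left hδPQ]
  exact mk_mem_range_of_isSymmetric f n hQ

/-- If the discriminant `Dis(f) = ∏_{i>j} (τᵢ - τⱼ)²` is regular (neither zero nor a zero
divisor) in the splitting algebra `B_f`, then the ring of invariants of `B_f` under the
action of the symmetric group `Sₙ` is exactly `B`. -/
theorem invariants_eq_base_of_discriminant_regular {B : Type*} [CommRing B]
    (f : Polynomial B) (n : ℕ) (hmonic : f.Monic) (hdeg : f.natDegree = n)
    (hne : (∏ p ∈ Finset.univ.filter (fun p : Fin n × Fin n => p.2 < p.1),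
        (univRoot B f n p.1 - univRoot B f n p.2) ^ 2) ≠ 0)
    (hreg : (∏ p ∈ Finset.univ.filter (fun p : Fin n × Fin n => p.2 < p.1),
        (univRoot B f n p.1 - univRoot B f n p.2) ^ 2) ∈
      nonZeroDivisors (SplittingAlgebra B f n)) :
    ∀ x : SplittingAlgebra B f n,
      (∀ σ : Equiv.Perm (Fin n), permHom B f n σ x = x) ↔
        x ∈ (algebraMap B (SplittingAlgebra B f n)).range :=
  invariants_eq_base_of_discriminant_regular_general f n hreg
end

section
/- Let f be the generic monic polynomial of degree n, i.e., f(t) = t^n - f_1 t^{n-1} + ... + (-1)^n f_n where f_1,...,f_n are algebraically independent variables over a ring A. Then there is an A-algebra isomorphism from the splitting algebra A[f_1,...,f_n]_f to the polynomial ring A[t_1,...,t_n] sending the universal root τ_i to t_i and f_i to the i-th elementary symmetric polynomial s_i. -/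
open MvPolynomial Polynomial

/-! The elimination `A[y][x] ⧸ (p_j(x) - y_j)_j ≃ A[x]` holds for arbitrary polynomials `p_j`:
the substitution `y_j ↦ p_j`, `x_i ↦ x_i` kills the relations, and it is inverted by the inclusion
`A[x] → A[y][x]`, because modulo the relations every `y_j` is already a polynomial in `x`.
For the generic polynomial the signed coefficients are the variables `f_j`, so the splitting ideal
is `(s_j(t) - f_j)_j` and the elimination with `p_j = s_j` gives the theorem. -/

namespace MvPolynomial

variable {A : Type*} [CommRing A] {σ τ : Type*}

noncomputable def substIdeal (p : τ → MvPolynomial σ A) :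
    Ideal (MvPolynomial σ (MvPolynomial τ A)) :=
  Ideal.span (Set.range fun j => map C (p j) - C (X j))

noncomputable def substEval (p : τ → MvPolynomial σ A) :
    MvPolynomial σ (MvPolynomial τ A) →ₐ[A] MvPolynomial σ A :=
  aevalTower (aeval p) X

theorem substEval_X (p : τ → MvPolynomial σ A) (i : σ) : substEval p (X i) = X i :=
  aevalTower_X _ _ _

theorem substEval_C_X (p : τ → MvPolynomial σ A) (j : τ) : substEval p (C (X j)) = p j := by
  rw [substEval, aevalTower_C, aeval_X]

theorem substEval_map_C (p : τ → MvPolynomial σ A) (q : MvPolynomial σ A) :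
    substEval p (map C q) = q := by
  induction q using MvPolynomial.induction_on with
  | C a => simp [substEval]
  | add q r hq hr => simp only [map_add, hq, hr]
  | mul_X q i hq => simp only [map_mul, map_X, hq, substEval_X]

theorem substIdeal_le_ker (p : τ → MvPolynomial σ A) :
    substIdeal p ≤ RingHom.ker (substEval p) := by
  rw [substIdeal, Ideal.span_le]
  rintro _ ⟨j, rfl⟩
  simp [substEval_map_C, substEval_C_X]

noncomputable def substLift (p : τ → MvPolynomial σ A) :
    (MvPolynomial σ (MvPolynomial τ A) ⧸ substIdeal p) →ₐ[A] MvPolynomial σ A :=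
  Ideal.Quotient.liftₐ _ (substEval p) fun _ h => RingHom.mem_ker.mp (substIdeal_le_ker p h)

@[simp]
theorem substLift_mk (p : τ → MvPolynomial σ A) (x : MvPolynomial σ (MvPolynomial τ A)) :
    substLift p (Ideal.Quotient.mk _ x) = substEval p x :=
  rfl

noncomputable def quotientSubstIdealAlgEquiv (p : τ → MvPolynomial σ A) :
    (MvPolynomial σ (MvPolynomial τ A) ⧸ substIdeal p) ≃ₐ[A] MvPolynomial σ A :=
  AlgEquiv.ofAlgHom (substLift p) ((Ideal.Quotient.mkₐ A _).comp (mapAlgHom (Algebra.ofId A _)))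
    (MvPolynomial.algHom_ext fun i => by simp [substEval_X])
    (by
      apply Ideal.Quotient.algHom_ext
      refine MvPolynomial.algHom_ext' (B := MvPolynomial σ (MvPolynomial τ A) ⧸ substIdeal p)
        (MvPolynomial.algHom_ext fun j => ?_) fun i => ?_
      · have hj : map C (p j) - C (X j) ∈ substIdeal p := Ideal.subset_span ⟨j, rfl⟩
        simpa [substEval_C_X] using Ideal.Quotient.eq.mpr hj
      · simp [substEval_X])

end MvPolynomial

theorem Polynomial.coeff_X_pow_add_sum_C_mul_X_pow {R : Type*} [CommRing R] {n : ℕ}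
    (b : Fin n → R) (i : Fin n) :
    (Polynomial.X ^ n + ∑ j : Fin n, Polynomial.C (b j) * Polynomial.X ^ (n - ((j : ℕ) + 1))).coeff
      (n - ((i : ℕ) + 1)) = b i := by
  rw [coeff_add, coeff_X_pow, if_neg (by omega), zero_add, finsetSum_coeff,
    Finset.sum_eq_single i]
  · simp
  · intro j _ hji
    rw [coeff_C_mul_X_pow, if_neg fun h => hji (Fin.ext (by omega))]
  · simp

theorem splittingIdeal_eq_span {R : Type*} [CommRing R] (n : ℕ) (a : Fin n → R) :
    splittingIdeal R (Polynomial.X ^ n + ∑ j : Fin n,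
        Polynomial.C ((-1 : R) ^ ((j : ℕ) + 1) * a j) * Polynomial.X ^ (n - ((j : ℕ) + 1))) n =
      Ideal.span (Set.range fun i : Fin n => esymm (Fin n) R ((i : ℕ) + 1) - MvPolynomial.C (a i)) := by
  simp only [splittingIdeal, Polynomial.coeff_X_pow_add_sum_C_mul_X_pow, ← mul_assoc, ← mul_pow,
    neg_one_mul, neg_neg, one_pow, one_mul]

/-- For the generic monic polynomial `f` of degree `n` (whose coefficients are independent
variables over `A`), the splitting algebra of `f` over `A[f₁,...,fₙ]` is `A`-isomorphic to the
polynomial ring `A[t₁,...,tₙ]`, sending `τᵢ ↦ tᵢ` and `fᵢ ↦ sᵢ`. -/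
theorem generic_splittingAlgebra_iso_polynomialRing (A : Type*) [CommRing A] (n : ℕ) :
    ∃ e : SplittingAlgebra (MvPolynomial (Fin n) A) (Polynomial.X ^ n + ∑ i : Fin n, Polynomial.C ((-1 : MvPolynomial (Fin n) A) ^ ((i : ℕ) + 1) * MvPolynomial.X i) * Polynomial.X ^ (n - ((i : ℕ) + 1))) n ≃ₐ[A] MvPolynomial (Fin n) A,
      (∀ i : Fin n,
        e (univRoot (MvPolynomial (Fin n) A) (Polynomial.X ^ n + ∑ i : Fin n, Polynomial.C ((-1 : MvPolynomial (Fin n) A) ^ ((i : ℕ) + 1) * MvPolynomial.X i) * Polynomial.X ^ (n - ((i : ℕ) + 1))) n i) = MvPolynomial.X i) ∧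
      (∀ i : Fin n,
        e (algebraMap (MvPolynomial (Fin n) A)
            (SplittingAlgebra (MvPolynomial (Fin n) A) (Polynomial.X ^ n + ∑ i : Fin n, Polynomial.C ((-1 : MvPolynomial (Fin n) A) ^ ((i : ℕ) + 1) * MvPolynomial.X i) * Polynomial.X ^ (n - ((i : ℕ) + 1))) n) (MvPolynomial.X i)) =
          esymm (Fin n) A ((i : ℕ) + 1)) := by
  have hI : splittingIdeal _ _ n = substIdeal fun i : Fin n => esymm (Fin n) A ((i : ℕ) + 1) :=
    (splittingIdeal_eq_span n MvPolynomial.X).trans (by simp only [substIdeal, map_esymm])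
  refine ⟨(Ideal.quotientEquivAlgOfEq A hI).trans (quotientSubstIdealAlgEquiv _), fun i => ?_,
    fun i => ?_⟩
  · exact substEval_X _ i
  · exact substEval_C_X _ i
end

section
/- For the generic monic polynomial f of degree n over A (with algebraically independent coefficients f_1,...,f_n), the universal roots τ_1,...,τ_n of f in the splitting algebra A[f_1,...,f_n]_f are algebraically independent over A. -/
open MvPolynomial Polynomial

/-!
Over `B = A[f₁, …, fₙ]`, the `A`-algebra map `B → A[t₁, …, tₙ]` with `fᵢ ↦ eᵢ(t)` turns
`t₁, …, tₙ` into roots of `f` in the sense of Vieta, so the universal property of the splitting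
algebra gives an `A`-algebra map `B_f → A[t₁, …, tₙ]` with `τᵢ ↦ tᵢ`. A family that maps onto an
algebraically independent one is itself algebraically independent.
-/

namespace SplittingAlgebra

variable {R B S : Type*} [CommSemiring R] [CommRing B] [Algebra R B] [CommRing S] [Algebra R S]
  {f : B[X]} {n : ℕ} (g : B →ₐ[R] S) (r : Fin n → S)
  (hr : ∀ i : Fin n, (Finset.univ.val.map r).esymm ((i : ℕ) + 1) =
    g ((-1) ^ ((i : ℕ) + 1) * f.coeff (n - ((i : ℕ) + 1))))

noncomputable def liftₐ : SplittingAlgebra B f n →ₐ[R] S :=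
  Ideal.Quotient.liftₐ (splittingIdeal B f n) (aevalTower g r) fun a ha => by
    refine (Ideal.span_le (I := RingHom.ker (aevalTower g r))).2 ?_ ha
    rintro _ ⟨i, rfl⟩
    have hesymm : aevalTower g r (esymm (Fin n) B (i + 1)) = (Finset.univ.val.map r).esymm (i + 1) := by
      simp_rw [esymm, map_sum, map_prod, MvPolynomial.aevalTower_X, Finset.esymm_map_val]
    simp only [SetLike.mem_coe, RingHom.mem_ker, map_sub, hesymm, MvPolynomial.aevalTower_C, hr,
      sub_self]

theorem liftₐ_univRoot (i : Fin n) :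
    liftₐ g r hr (univRoot B f n i) = r i :=
  MvPolynomial.aevalTower_X g r i

end SplittingAlgebra

noncomputable def monicOfSignedCoeffs {R : Type*} [CommRing R] {n : ℕ} (c : Fin n → R) : R[X] :=
  Polynomial.X ^ n + ∑ i : Fin n,
    Polynomial.C ((-1 : R) ^ ((i : ℕ) + 1) * c i) * Polynomial.X ^ (n - ((i : ℕ) + 1))

theorem coeff_monicOfSignedCoeffs {R : Type*} [CommRing R] {n : ℕ} (c : Fin n → R) (i : Fin n) :
    (monicOfSignedCoeffs c).coeff (n - ((i : ℕ) + 1)) = (-1) ^ ((i : ℕ) + 1) * c i := by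
  have hinj : ∀ j : Fin n, n - ((i : ℕ) + 1) = n - ((j : ℕ) + 1) ↔ j = i := fun j => by
    rw [Fin.ext_iff]; omega
  simp only [monicOfSignedCoeffs, Polynomial.coeff_add, Polynomial.finsetSum_coeff,
    Polynomial.coeff_C_mul, Polynomial.coeff_X_pow, hinj,
    mul_ite, mul_one, mul_zero, Finset.sum_ite_eq', Finset.mem_univ, if_true,
    if_neg (show n - ((i : ℕ) + 1) ≠ n by omega), zero_add]

/-- For the generic monic polynomial `f` of degree `n` over `A`, the universal roots
`τ₁, ..., τₙ` in the splitting algebra are algebraically independent over `A`. -/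
theorem generic_univRoots_algebraicIndependent (A : Type*) [CommRing A] (n : ℕ) :
    AlgebraicIndependent A
      (fun i : Fin n => univRoot (MvPolynomial (Fin n) A) (Polynomial.X ^ n + ∑ i : Fin n, Polynomial.C ((-1 : MvPolynomial (Fin n) A) ^ ((i : ℕ) + 1) * MvPolynomial.X i) * Polynomial.X ^ (n - ((i : ℕ) + 1))) n i) := by
  show AlgebraicIndependent A (univRoot _ (monicOfSignedCoeffs MvPolynomial.X) n)
  let g : MvPolynomial (Fin n) A →ₐ[A] MvPolynomial (Fin n) A :=
    aeval fun j => esymm (Fin n) A ((j : ℕ) + 1)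
  have hroots (i : Fin n) : (Finset.univ.val.map MvPolynomial.X).esymm ((i : ℕ) + 1) =
      g ((-1) ^ ((i : ℕ) + 1) *
        (monicOfSignedCoeffs MvPolynomial.X).coeff (n - ((i : ℕ) + 1))) := by
    rw [coeff_monicOfSignedCoeffs, ← mul_assoc, ← pow_add, Even.neg_one_pow ⟨_, rfl⟩, one_mul,
      MvPolynomial.aeval_X, esymm_eq_multiset_esymm]
  refine .of_comp (SplittingAlgebra.liftₐ g MvPolynomial.X hroots) ?_
  convert MvPolynomial.algebraicIndependent_X (Fin n) A
  exact funext (SplittingAlgebra.liftₐ_univRoot g MvPolynomial.X hroots)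
end

section
/- For the generic monic polynomial f of degree n over A, the ring of invariants of the splitting algebra A[f_1,...,f_n]_f under the action of the symmetric group S_n (permuting the universal roots) is exactly A[f_1,...,f_n]. -/
open MvPolynomial Polynomial

/-!
In the splitting algebra of the generic polynomial the relations `eₖ(τ) = fₖ` merely eliminate
the coefficients, so `fₖ ↦ eₖ(t)`, `τᵢ ↦ tᵢ` identifies it with `A[t₁, …, tₙ]`, the symmetric group
acting by renaming the variables and `A[f₁, …, fₙ]` landing in the subalgebra generated by the
`eₖ(t)`. An invariant therefore becomes a symmetric polynomial, which by the fundamental theorem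
of symmetric polynomials is a polynomial in the `eₖ(t)`.
-/

theorem eval₂Hom_X_esymm {σ R S : Type*} [Fintype σ] [CommSemiring R] [CommSemiring S]
    (f : R →+* MvPolynomial σ S) (k : ℕ) :
    eval₂Hom f MvPolynomial.X (esymm σ R k) = esymm σ S k := by
  simp [esymm, map_sum, map_prod]

section SplittingAlgebra

variable {A : Type*} [CommRing A] {f : Polynomial A} {n : ℕ}

theorem aeval_univRoot (p : MvPolynomial (Fin n) A) :
    MvPolynomial.aeval (univRoot A f n) p = Ideal.Quotient.mk (splittingIdeal A f n) p := by
  have h := DFunLike.congr_fun (MvPolynomial.comp_aeval (R := A) MvPolynomial.X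
    (Ideal.Quotient.mkₐ A (splittingIdeal A f n))) p
  rw [MvPolynomial.aeval_X_left, AlgHom.comp_id] at h
  exact h.symm

theorem aeval_univRoot_esymm {R : Type*} [CommRing R] [Algebra R A] {k : ℕ} (hk₀ : k ≠ 0)
    (hkn : k ≤ n) :
    MvPolynomial.aeval (univRoot A f n) (esymm (Fin n) R k) =
      algebraMap A (SplittingAlgebra A f n) ((-1) ^ k * f.coeff (n - k)) := by
  obtain ⟨i, rfl⟩ : ∃ i : Fin n, k = (i : ℕ) + 1 :=
    ⟨⟨k - 1, by omega⟩, (Nat.succ_pred_eq_of_ne_zero hk₀).symm⟩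
  rw [aeval_esymm_eq_multiset_esymm, ← aeval_esymm_eq_multiset_esymm (Fin n) A, aeval_univRoot]
  exact Ideal.Quotient.eq.mpr (Ideal.subset_span ⟨i, rfl⟩)

end SplittingAlgebra

section Generic

variable (A : Type*) [CommRing A] (n : ℕ)

noncomputable def genericPoly : Polynomial (MvPolynomial (Fin n) A) :=
  Polynomial.X ^ n + ∑ i : Fin n,
    Polynomial.C ((-1 : MvPolynomial (Fin n) A) ^ ((i : ℕ) + 1) * MvPolynomial.X i) *
      Polynomial.X ^ (n - ((i : ℕ) + 1))

variable {A n}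

theorem signed_coeff_genericPoly (i : Fin n) :
    (-1) ^ ((i : ℕ) + 1) * (genericPoly A n).coeff (n - ((i : ℕ) + 1)) = MvPolynomial.X i := by
  have hexp : ∀ j : Fin n, n - ((i : ℕ) + 1) = n - ((j : ℕ) + 1) ↔ j = i := by
    intro j; rw [Fin.ext_iff]; omega
  simp only [genericPoly, Polynomial.coeff_add, Polynomial.coeff_X_pow,
    Polynomial.finsetSum_coeff, Polynomial.coeff_C_mul_X_pow, hexp, Finset.sum_ite_eq',
    Finset.mem_univ, if_true, if_neg (show n - ((i : ℕ) + 1) ≠ n by omega), zero_add,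
    ← mul_assoc, ← mul_pow, neg_one_mul, neg_neg, one_pow, one_mul]

variable (A n)

noncomputable def genericToMvPolynomial :
    SplittingAlgebra (MvPolynomial (Fin n) A) (genericPoly A n) n →+* MvPolynomial (Fin n) A :=
  Ideal.Quotient.lift _
    (eval₂Hom (MvPolynomial.aeval fun i : Fin n => esymm (Fin n) A ((i : ℕ) + 1)).toRingHom
      MvPolynomial.X) <| by
    intro p hp
    refine (Ideal.span_le (I := RingHom.ker _)).mpr ?_ hp
    rintro _ ⟨i, rfl⟩
    simp only [SetLike.mem_coe, RingHom.mem_ker, map_sub, eval₂Hom_X_esymm, eval₂Hom_C,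
      signed_coeff_genericPoly, AlgHom.toRingHom_eq_coe, RingHom.coe_coe, MvPolynomial.aeval_X,
      sub_self]

variable {A n}

theorem genericToMvPolynomial_algebraMap (b : MvPolynomial (Fin n) A) :
    genericToMvPolynomial A n (algebraMap _ _ b) =
      MvPolynomial.aeval (fun i : Fin n => esymm (Fin n) A ((i : ℕ) + 1)) b :=
  eval₂Hom_C _ _ _

theorem rename_aeval_esymm (e : Equiv.Perm (Fin n)) (b : MvPolynomial (Fin n) A) :
    rename e (MvPolynomial.aeval (fun i : Fin n => esymm (Fin n) A ((i : ℕ) + 1)) b) =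
      MvPolynomial.aeval (fun i : Fin n => esymm (Fin n) A ((i : ℕ) + 1)) b := by
  rw [← esymmAlgHom_apply]
  exact (esymmAlgHom (Fin n) A n b).2 e

theorem genericToMvPolynomial_permHom (σ : Equiv.Perm (Fin n))
    (x : SplittingAlgebra (MvPolynomial (Fin n) A) (genericPoly A n) n) :
    genericToMvPolynomial A n (permHom _ _ n σ x) =
      rename σ.symm (genericToMvPolynomial A n x) := by
  obtain ⟨p, rfl⟩ := Ideal.Quotient.mk_surjective x
  change MvPolynomial.eval₂ _ _ (rename σ.symm p) = rename σ.symm (MvPolynomial.eval₂ _ _ p)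
  rw [eval₂_rename, ← AlgHom.coe_toRingHom, MvPolynomial.hom_eval₂]
  congr 1
  · exact RingHom.ext fun b => (rename_aeval_esymm σ.symm b).symm
  · funext i
    simp

theorem aeval_univRoot_genericToMvPolynomial
    (x : SplittingAlgebra (MvPolynomial (Fin n) A) (genericPoly A n) n) :
    MvPolynomial.aeval (univRoot _ _ n) (genericToMvPolynomial A n x) = x := by
  have hcoeff : (MvPolynomial.aeval (univRoot _ (genericPoly A n) n)).toRingHom.comp
      (MvPolynomial.aeval fun i : Fin n => esymm (Fin n) A ((i : ℕ) + 1)).toRingHom =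
        algebraMap (MvPolynomial (Fin n) A) (SplittingAlgebra _ (genericPoly A n) n) := by
    refine MvPolynomial.ringHom_ext (fun a => ?_) (fun k => ?_)
    · simp only [AlgHom.toRingHom_eq_coe, RingHom.coe_comp, RingHom.coe_coe,
        Function.comp_apply, MvPolynomial.aeval_C, MvPolynomial.algebraMap_eq]
      rfl
    · simp [aeval_univRoot_esymm, signed_coeff_genericPoly]
  have hcomp : (MvPolynomial.aeval (univRoot _ (genericPoly A n) n)).toRingHom.comp
      (eval₂Hom (MvPolynomial.aeval fun i : Fin n => esymm (Fin n) A ((i : ℕ) + 1)).toRingHom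
        MvPolynomial.X) =
        (MvPolynomial.aeval (R := MvPolynomial (Fin n) A) (univRoot _ _ n)).toRingHom := by
    refine MvPolynomial.ringHom_ext (fun b => ?_) (fun i => ?_)
    · simpa using RingHom.congr_fun hcoeff b
    · simp
  obtain ⟨p, rfl⟩ := Ideal.Quotient.mk_surjective x
  exact (RingHom.congr_fun hcomp p).trans (aeval_univRoot (A := MvPolynomial (Fin n) A) p)

theorem genericToMvPolynomial_injective : Function.Injective (genericToMvPolynomial A n) :=
  Function.LeftInverse.injective aeval_univRoot_genericToMvPolynomial

end Generic

/-- For the generic monic polynomial `f` of degree `n` over `A`, the ring of invariants of the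
splitting algebra under the symmetric group `Sₙ` is exactly the coefficient ring
`A[f₁,...,fₙ]`. -/
theorem generic_splittingAlgebra_invariants (A : Type*) [CommRing A] (n : ℕ) :
    ∀ x : SplittingAlgebra (MvPolynomial (Fin n) A) (Polynomial.X ^ n + ∑ i : Fin n, Polynomial.C ((-1 : MvPolynomial (Fin n) A) ^ ((i : ℕ) + 1) * MvPolynomial.X i) * Polynomial.X ^ (n - ((i : ℕ) + 1))) n,
      (∀ σ : Equiv.Perm (Fin n), permHom (MvPolynomial (Fin n) A) (Polynomial.X ^ n + ∑ i : Fin n, Polynomial.C ((-1 : MvPolynomial (Fin n) A) ^ ((i : ℕ) + 1) * MvPolynomial.X i) * Polynomial.X ^ (n - ((i : ℕ) + 1))) n σ x = x) ↔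
        x ∈ (algebraMap (MvPolynomial (Fin n) A)
          (SplittingAlgebra (MvPolynomial (Fin n) A) (Polynomial.X ^ n + ∑ i : Fin n, Polynomial.C ((-1 : MvPolynomial (Fin n) A) ^ ((i : ℕ) + 1) * MvPolynomial.X i) * Polynomial.X ^ (n - ((i : ℕ) + 1))) n)).range := by
  change ∀ x : SplittingAlgebra (MvPolynomial (Fin n) A) (genericPoly A n) n,
    (∀ σ, permHom _ (genericPoly A n) n σ x = x) ↔
      x ∈ (algebraMap (MvPolynomial (Fin n) A) _).range
  intro x
  refine ⟨fun hx => ?_, fun ⟨q, hq⟩ σ => hq ▸ (permHom _ _ n σ).commutes q⟩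
  have hsym : (genericToMvPolynomial A n x).IsSymmetric := fun e => by
    simpa [hx] using (genericToMvPolynomial_permHom e.symm x).symm
  obtain ⟨q, hq⟩ := esymmAlgHom_surjective A (Fintype.card_fin n).le ⟨_, hsym⟩
  exact ⟨q, genericToMvPolynomial_injective <| (genericToMvPolynomial_algebraMap q).trans <|
    (esymmAlgHom_apply q).symm.trans (congrArg Subtype.val hq)⟩
end

section
/- Let f be a monic polynomial of degree n over a ring A with universal roots τ_1,...,τ_n in the splitting algebra A_f, and let φ : A_f → B be an A-algebra homomorphism. For every polynomial h in n variables over A that is invariant under the S_n-action permuting the variables, the element h(φ(τ_1),...,φ(τ_n)) lies in the image of A in B. -/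
open MvPolynomial Polynomial

/-- If `φ : A_f → B` is an `A`-algebra homomorphism and `h` is a symmetric polynomial in `n`
variables over `A`, then `h(φ(τ₁), ..., φ(τₙ))` lies in the image of `A` in `B`. -/
theorem symmetric_eval_of_univRoots_mem_base {A B : Type*} [CommRing A] [CommRing B]
    [Algebra A B] (f : Polynomial A) (n : ℕ) (hmonic : f.Monic) (hdeg : f.natDegree = n)
    (φ : SplittingAlgebra A f n →ₐ[A] B)
    (h : MvPolynomial (Fin n) A) (hh : h.IsSymmetric) :
    (MvPolynomial.aeval fun i : Fin n => φ (univRoot A f n i)) h ∈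
      (algebraMap A B).range := by
  obtain ⟨p, hp⟩ := esymmAlgHom_surjective (σ := Fin n) (R := A) (n := n)
    (by simp) ⟨h, hh⟩
  have hp' : (MvPolynomial.aeval fun i : Fin n => esymm (Fin n) A ((i : ℕ) + 1)) p = h := by
    have := congrArg Subtype.val hp
    rwa [esymmAlgHom_apply] at this
  set c : Fin n → A := fun i => (-1 : A) ^ ((i : ℕ) + 1) * f.coeff (n - ((i : ℕ) + 1)) with hc
  refine ⟨MvPolynomial.eval c p, ?_⟩
  have key : (MvPolynomial.aeval fun i : Fin n => φ (univRoot A f n i)) h =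
      (φ.comp (Ideal.Quotient.mkₐ A (splittingIdeal A f n))) h := by
    rw [MvPolynomial.aeval_unique (φ.comp (Ideal.Quotient.mkₐ A (splittingIdeal A f n)))]
    rfl
  rw [key, ← hp']
  symm
  have hmk : ∀ i : Fin n,
      Ideal.Quotient.mk (splittingIdeal A f n) (esymm (Fin n) A ((i : ℕ) + 1)) =
        algebraMap A (SplittingAlgebra A f n) (c i) := by
    intro i
    show _ = Ideal.Quotient.mk (splittingIdeal A f n) (MvPolynomial.C (c i))
    rw [Ideal.Quotient.eq]
    exact Ideal.subset_span ⟨i, rfl⟩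
  calc (φ.comp (Ideal.Quotient.mkₐ A (splittingIdeal A f n)))
        ((MvPolynomial.aeval fun i : Fin n => esymm (Fin n) A ((i : ℕ) + 1)) p)
      = (MvPolynomial.aeval fun i : Fin n =>
          (φ.comp (Ideal.Quotient.mkₐ A (splittingIdeal A f n)))
            (esymm (Fin n) A ((i : ℕ) + 1))) p := by
        exact MvPolynomial.comp_aeval_apply (fun i : Fin n => esymm (Fin n) A ((i : ℕ) + 1))
          (φ.comp (Ideal.Quotient.mkₐ A (splittingIdeal A f n))) p
    _ = (MvPolynomial.aeval fun i : Fin n => algebraMap A B (c i)) p := by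
        have heq : (fun i : Fin n =>
            (φ.comp (Ideal.Quotient.mkₐ A (splittingIdeal A f n)))
              (esymm (Fin n) A ((i : ℕ) + 1))) = fun i => algebraMap A B (c i) := by
          funext i
          show φ (Ideal.Quotient.mk (splittingIdeal A f n)
            (esymm (Fin n) A ((i : ℕ) + 1))) = _
          rw [hmk i, AlgHom.commutes]
        rw [heq]
    _ = algebraMap A B (MvPolynomial.eval c p) := by
        have h1 : (MvPolynomial.aeval fun i : Fin n => algebraMap A B (c i)) p =
            (Algebra.ofId A B) ((MvPolynomial.aeval c) p) :=
          (MvPolynomial.comp_aeval_apply c (Algebra.ofId A B) p).symm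
        rw [h1]
        have h2 : (MvPolynomial.aeval c) p = MvPolynomial.eval c p := by
          rw [MvPolynomial.aeval_def, MvPolynomial.eval]
          simp [MvPolynomial.eval₂Hom]
        rw [h2]; rfl
end

section
/- Let A be a ring and let f_1, f_2, h ∈ A with h ≠ 0, 2h = 0, and h·f_1 = 0. Then for f(t) = t^2 - f_1 t + f_2, the element g + h·τ_1 of the splitting algebra A_f is invariant under S_2 for every g ∈ A; in particular, if additionally h·τ_1 is not in the image of A, the ring of invariants of A_f under S_2 is strictly larger than A. -/
open MvPolynomial Polynomial

lemma permHom_mk {A : Type*} [CommRing A] (f : Polynomial A) (n : ℕ)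
    (σ : Equiv.Perm (Fin n)) (p : MvPolynomial (Fin n) A) :
    permHom A f n σ (Ideal.Quotient.mk (splittingIdeal A f n) p) =
      Ideal.Quotient.mk (splittingIdeal A f n) (rename (σ.symm : Fin n → Fin n) p) := rfl

lemma permHom_univRoot {A : Type*} [CommRing A] (f : Polynomial A) (n : ℕ)
    (σ : Equiv.Perm (Fin n)) (i : Fin n) :
    permHom A f n σ (univRoot A f n i) = univRoot A f n (σ.symm i) := by
  rw [univRoot, permHom_mk, rename_X]; rfl

lemma algebraMap_splitting {A : Type*} [CommRing A] (f : Polynomial A) (n : ℕ) (a : A) :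
    algebraMap A (SplittingAlgebra A f n) a =
      Ideal.Quotient.mk (splittingIdeal A f n) (MvPolynomial.C a) := rfl

lemma sum_univRoot {A : Type*} [CommRing A] (f1 f2 : A) :
    univRoot A (Polynomial.X ^ 2 - Polynomial.C f1 * Polynomial.X + Polynomial.C f2) 2 0 +
      univRoot A (Polynomial.X ^ 2 - Polynomial.C f1 * Polynomial.X + Polynomial.C f2) 2 1 =
      algebraMap A _ f1 := by
  set f : Polynomial A := Polynomial.X ^ 2 - Polynomial.C f1 * Polynomial.X + Polynomial.C f2
  have hmem : esymm (Fin 2) A ((((0 : Fin 2)) : ℕ) + 1) -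
      MvPolynomial.C ((-1 : A) ^ ((((0 : Fin 2)) : ℕ) + 1) * f.coeff (2 - ((((0 : Fin 2)) : ℕ) + 1)))
      ∈ splittingIdeal A f 2 :=
    Ideal.subset_span ⟨0, rfl⟩
  have hcoeff : f.coeff 1 = -f1 := by
    simp [f, Polynomial.coeff_X, Polynomial.coeff_one]
  have hesymm : esymm (Fin 2) A 1 = MvPolynomial.X 0 + MvPolynomial.X 1 := by
    rw [esymm_one, Fin.sum_univ_two]
  norm_num [hcoeff, hesymm] at hmem
  have hz : Ideal.Quotient.mk (splittingIdeal A f 2)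
      (MvPolynomial.X 0 + MvPolynomial.X 1 - MvPolynomial.C f1) = 0 := by
    rw [Ideal.Quotient.eq_zero_iff_mem]
    simpa using hmem
  rw [map_sub, map_add, sub_eq_zero] at hz
  exact hz

lemma h_mul_univRoot {A : Type*} [CommRing A] (f1 f2 h : A)
    (h2 : 2 * h = 0) (hf1 : h * f1 = 0) :
    algebraMap A (SplittingAlgebra A (Polynomial.X ^ 2 - Polynomial.C f1 * Polynomial.X + Polynomial.C f2) 2) h *
      univRoot A (Polynomial.X ^ 2 - Polynomial.C f1 * Polynomial.X + Polynomial.C f2) 2 0 =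
    algebraMap A (SplittingAlgebra A (Polynomial.X ^ 2 - Polynomial.C f1 * Polynomial.X + Polynomial.C f2) 2) h *
      univRoot A (Polynomial.X ^ 2 - Polynomial.C f1 * Polynomial.X + Polynomial.C f2) 2 1 := by
  set f : Polynomial A := Polynomial.X ^ 2 - Polynomial.C f1 * Polynomial.X + Polynomial.C f2
  set τ0 := univRoot A f 2 0
  set τ1 := univRoot A f 2 1
  have hsum : τ0 + τ1 = algebraMap A _ f1 := sum_univRoot f1 f2
  have key : algebraMap A (SplittingAlgebra A f 2) h * (τ0 + τ1) = 0 := by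
    rw [hsum, ← map_mul, hf1, map_zero]
  have h2' : (2 : SplittingAlgebra A f 2) * algebraMap A (SplittingAlgebra A f 2) h = 0 := by
    have : algebraMap A (SplittingAlgebra A f 2) (2 * h) = 0 := by rw [h2, map_zero]
    rw [map_mul] at this
    convert this using 2
    exact (map_ofNat (algebraMap A (SplittingAlgebra A f 2)) 2).symm
  have := key
  rw [mul_add] at this
  -- h τ0 + h τ1 = 0, and 2 h τ0 = 0, so h τ0 = - h τ1 = h τ1... compute
  have hneg : algebraMap A (SplittingAlgebra A f 2) h * τ0 =
      - (algebraMap A (SplittingAlgebra A f 2) h * τ1) := by linear_combination this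
  rw [hneg]
  have : (2 : SplittingAlgebra A f 2) * (algebraMap A (SplittingAlgebra A f 2) h * τ1) = 0 := by
    rw [← mul_assoc, h2', zero_mul]
  linear_combination -this

/-- If `h ≠ 0`, `2h = 0` and `h·f₁ = 0`, then every element `g + h·τ₁` of the splitting
algebra of `f(t) = t² - f₁t + f₂` is invariant under `S₂`; in particular if `h·τ₁` is not in
the image of `A`, the ring of invariants is strictly larger than `A`. -/
theorem invariants_strictly_larger_example {A : Type*} [CommRing A] (f1 f2 h : A)
    (hne : h ≠ 0) (h2 : 2 * h = 0) (hf1 : h * f1 = 0) :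
    (∀ g : A, ∀ σ : Equiv.Perm (Fin 2),
      permHom A (Polynomial.X ^ 2 - Polynomial.C f1 * Polynomial.X + Polynomial.C f2) 2 σ
          (algebraMap A (SplittingAlgebra A (Polynomial.X ^ 2 - Polynomial.C f1 * Polynomial.X + Polynomial.C f2) 2) g +
            algebraMap A (SplittingAlgebra A (Polynomial.X ^ 2 - Polynomial.C f1 * Polynomial.X + Polynomial.C f2) 2) h * univRoot A (Polynomial.X ^ 2 - Polynomial.C f1 * Polynomial.X + Polynomial.C f2) 2 0) =
        algebraMap A (SplittingAlgebra A (Polynomial.X ^ 2 - Polynomial.C f1 * Polynomial.X + Polynomial.C f2) 2) g +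
          algebraMap A (SplittingAlgebra A (Polynomial.X ^ 2 - Polynomial.C f1 * Polynomial.X + Polynomial.C f2) 2) h * univRoot A (Polynomial.X ^ 2 - Polynomial.C f1 * Polynomial.X + Polynomial.C f2) 2 0) ∧
    (algebraMap A (SplittingAlgebra A (Polynomial.X ^ 2 - Polynomial.C f1 * Polynomial.X + Polynomial.C f2) 2) h * univRoot A (Polynomial.X ^ 2 - Polynomial.C f1 * Polynomial.X + Polynomial.C f2) 2 0 ∉
        (algebraMap A (SplittingAlgebra A (Polynomial.X ^ 2 - Polynomial.C f1 * Polynomial.X + Polynomial.C f2) 2)).range →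
      ∃ x : SplittingAlgebra A (Polynomial.X ^ 2 - Polynomial.C f1 * Polynomial.X + Polynomial.C f2) 2,
        (∀ σ : Equiv.Perm (Fin 2), permHom A (Polynomial.X ^ 2 - Polynomial.C f1 * Polynomial.X + Polynomial.C f2) 2 σ x = x) ∧
          x ∉ (algebraMap A (SplittingAlgebra A (Polynomial.X ^ 2 - Polynomial.C f1 * Polynomial.X + Polynomial.C f2) 2)).range) := by
  set f : Polynomial A := Polynomial.X ^ 2 - Polynomial.C f1 * Polynomial.X + Polynomial.C f2
  have hfin : ∀ i : Fin 2, i = 0 ∨ i = 1 := by decide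
  have inv : ∀ g : A, ∀ σ : Equiv.Perm (Fin 2),
      permHom A f 2 σ (algebraMap A (SplittingAlgebra A f 2) g +
        algebraMap A (SplittingAlgebra A f 2) h * univRoot A f 2 0) =
      algebraMap A (SplittingAlgebra A f 2) g +
        algebraMap A (SplittingAlgebra A f 2) h * univRoot A f 2 0 := by
    intro g σ
    rw [map_add, map_mul, AlgHom.commutes, AlgHom.commutes, permHom_univRoot]
    rcases hfin (σ.symm 0) with h0 | h1
    · rw [h0]
    · rw [h1, ← h_mul_univRoot f1 f2 h h2 hf1]
  refine ⟨inv, fun hnot => ?_⟩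
  refine ⟨algebraMap A (SplittingAlgebra A f 2) h * univRoot A f 2 0, fun σ => ?_, hnot⟩
  have := inv 0 σ
  simpa using this
end
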